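/- Let W : Fin d → Fin d → ℝ have all entries in [0,1] and let α ∈ (0,1]. Then for all nodes x, y, z: S̃_W^(1)(x,y|z) ≤ log 𝔼_{A∼Bern(W)}[S_A^(1)(x,y|z)] and C̃_W^(1)(x,y|z) ≤ log 𝔼_{A∼Bern(W)}[C_A^(1)(x,y|z)], where S_A^(1) and C_A^(1) are {0,1}-valued, the inequalities are in the extended reals, and log 0 = −∞. (Theorem 3.7, 1st-order inequalities.) -/

import Mathlib

open MeasureTheory
open scoped ENNReal

noncomputable section

/-- The reachability formula `R_A^(l)(x,y)`, defined recursively. -/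
def ReachF {d : ℕ} (A : Fin d → Fin d → Bool) : ℕ → Fin d → Fin d → Bool
  | 0, x, y => decide (x = y)
  | l + 1, x, y =>
      (decide (∃ u : Fin d, ReachF A l x u = true ∧ A u y = true)) || ReachF A l x y

/-- Bernoulli measure on `Bool` with parameter `p`. -/
def bernoulliMeasure (p : ℝ) : Measure Bool :=
  ENNReal.ofReal p • Measure.dirac true + ENNReal.ofReal (1 - p) • Measure.dirac false

instance (p : ℝ) : IsFiniteMeasure (bernoulliMeasure p) := by
  constructor
  have h : bernoulliMeasure p Set.univ = ENNReal.ofReal p + ENNReal.ofReal (1 - p) := by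
    simp [bernoulliMeasure]
  rw [h]
  exact ENNReal.add_lt_top.2 ⟨ENNReal.ofReal_lt_top, ENNReal.ofReal_lt_top⟩

/-- `Bern(W)`: the product over all pairs `(u, v)` of Bernoulli measures, under which
the coordinates `A u v` are independent with `ℙ(A u v = true) = W u v`. -/
def bernMeasure {d : ℕ} (W : Fin d → Fin d → ℝ) : Measure (Fin d → Fin d → Bool) :=
  Measure.pi fun u => Measure.pi fun v => bernoulliMeasure (W u v)

/-- Exponential on extended reals, with `exp (−∞) = 0` and `exp ⊤ = ⊤`. -/
def eexp (x : EReal) : ℝ≥0∞ :=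
  if x = ⊥ then 0 else if x = ⊤ then ⊤ else ENNReal.ofReal (Real.exp x.toReal)

/-- Logarithm on `ℝ≥0∞`, with `log 0 = −∞` and `log ⊤ = ⊤`. -/
def elog (x : ℝ≥0∞) : EReal :=
  if x = 0 then ⊥ else if x = ⊤ then ⊤ else ((Real.log x.toReal : ℝ) : EReal)

/-- LogMeanExp soft disjunction `T⊕_α` with temperature `α` over a finite family. -/
def softOr (α : ℝ) {ι : Type*} [Fintype ι] (x : ι → EReal) : EReal :=
  (α : EReal) * elog ((∑ i, eexp (((α⁻¹ : ℝ) : EReal) * x i)) / (Fintype.card ι : ℝ≥0∞))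

/-- Soft graph reachability `R̃_W^(l)`. -/
def softReach {d : ℕ} (α : ℝ) (W : Fin d → Fin d → ℝ) : ℕ → Fin d → Fin d → EReal
  | 0, x, y => if x = y then 0 else ⊥
  | l + 1, x, y =>
      softOr α
        (Fin.cons (softReach α W l x y)
          (fun u : Fin d => softReach α W l x u + elog (ENNReal.ofReal (W u y))) :
          Fin (d + 1) → EReal)

/-- Soft graph unreachability `Ũ_W^(l)`. -/
def softUnreach {d : ℕ} (α : ℝ) (W : Fin d → Fin d → ℝ) : ℕ → Fin d → Fin d → EReal
  | 0, x, y => if x ≠ y then 0 else ⊥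
  | l + 1, x, y =>
      (∑ u : Fin d,
        softOr α ![softUnreach α W l x u, elog (ENNReal.ofReal (1 - W u y))])
        + softUnreach α W l x y

/-- The 0th-order d-connection formula `C_A^(0)(x,y)`, using `R_A := R_A^(d)`. -/
def C0 {d : ℕ} (A : Fin d → Fin d → Bool) (x y : Fin d) : Bool :=
  decide (∃ a : Fin d, ReachF A d a x = true ∧ ReachF A d a y = true)

/-- The soft 0th-order d-separation score `S̃_W^(0)`. -/
def softS0 {d : ℕ} (α : ℝ) (W : Fin d → Fin d → ℝ) (x y : Fin d) : EReal :=
  ∑ a : Fin d, softOr α ![softUnreach α W d a x, softUnreach α W d a y]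

/-- The soft 0th-order d-connection score `C̃_W^(0)`. -/
def softC0 {d : ℕ} (α : ℝ) (W : Fin d → Fin d → ℝ) (x y : Fin d) : EReal :=
  softOr α (fun a : Fin d => softReach α W d a x + softReach α W d a y)
/-- The node-deleted graph `A₋z`. -/
def delNode {d : ℕ} (A : Fin d → Fin d → Bool) (z : Fin d) : Fin d → Fin d → Bool :=
  fun u v => A u v && decide (u ≠ z) && decide (v ≠ z)

/-- The node-deleted weight matrix `W₋z`. -/
def delW {d : ℕ} (W : Fin d → Fin d → ℝ) (z : Fin d) : Fin d → Fin d → ℝ :=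
  fun u v => if u ≠ z ∧ v ≠ z then W u v else 0

/-- The 1st-order d-connection formula `C_A^(1)(x,y∣z)`. -/
def C1 {d : ℕ} (A : Fin d → Fin d → Bool) (x y z : Fin d) : Bool :=
  C0 (delNode A z) x y ||
    ((decide (∃ a : Fin d, a ≠ z ∧ C0 (delNode A z) x a = true ∧ ReachF A d a z = true)) &&
     (decide (∃ b : Fin d, b ≠ z ∧ C0 (delNode A z) y b = true ∧ ReachF A d b z = true)))

/-- The soft 1st-order d-separation score `S̃_W^(1)(x,y∣z)`. -/
def softS1 {d : ℕ} (α : ℝ) (W : Fin d → Fin d → ℝ) (x y z : Fin d) : EReal :=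
  softS0 α (delW W z) x y +
    softOr α
      ![∑ a ∈ Finset.univ.erase z,
          softOr α ![softS0 α (delW W z) x a, softUnreach α W d a z],
        ∑ b ∈ Finset.univ.erase z,
          softOr α ![softS0 α (delW W z) y b, softUnreach α W d b z]]

/-- The soft 1st-order d-connection score `C̃_W^(1)(x,y∣z)`. -/
def softC1 {d : ℕ} (α : ℝ) (W : Fin d → Fin d → ℝ) (x y z : Fin d) : EReal :=
  softOr α
    ![softC0 α (delW W z) x y,
      (softOr α (fun a : {a : Fin d // a ≠ z} =>
          softC0 α (delW W z) x a.1 + softReach α W d a.1 z)) +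
      (softOr α (fun b : {b : Fin d // b ≠ z} =>
          softC0 α (delW W z) y b.1 + softReach α W d b.1 z))]

/-!
Each soft score is assembled from the log-probabilities `log W u v` and `log (1 - W u v)` of
edge events by `T⊗ = +` and `T⊕_α`, following the Boolean formula it relaxes, and we bound it by
the log-probability of the corresponding event. `T⊕_α` is a soft maximum, so it is at most its
largest argument, which covers disjunctions since `log ℙ` is monotone. `T⊗` covers conjunctions
because every event involved is monotone in the graph (reachability and connection events are
increasing, their negations decreasing) and `Bern(W)` is a product measure, so Harris' inequality
`ℙ(E)ℙ(F) ≤ ℙ(E ∩ F)` holds. Node deletion is handled by the fact that `A₋z ∼ Bern(W₋z)` when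
`A ∼ Bern(W)`, while `A ↦ A₋z` is monotone, so events about `A₋z` are still monotone events
about `A`.
-/

lemma IsUpperSet.monotone_indicator_one {α β : Type*} [Preorder α] [Zero β] [One β] [Preorder β]
    [ZeroLEOneClass β] {s : Set α} (hs : IsUpperSet s) : Monotone (s.indicator (1 : α → β)) := by
  intro a b hab
  by_cases ha : a ∈ s
  · simp [ha, hs hab ha]
  · simp only [Set.indicator_of_notMem ha]
    exact Set.indicator_nonneg (fun _ _ => zero_le_one) b

lemma IsLowerSet.antitone_indicator_one {α β : Type*} [Preorder α] [Zero β] [One β] [Preorder β]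
    [ZeroLEOneClass β] {s : Set α} (hs : IsLowerSet s) : Antitone (s.indicator (1 : α → β)) := by
  intro a b hab
  by_cases hb : b ∈ s
  · simp [hb, hs hab hb]
  · simp only [Set.indicator_of_notMem hb]
    exact Set.indicator_nonneg (fun _ _ => zero_le_one) a

lemma fkg_of_antitone {α β : Type*} [DistribLattice α] [Fintype α] [CommSemiring β]
    [LinearOrder β] [IsStrictOrderedRing β] [ExistsAddOfLE β] {μ f g : α → β} (hμ₀ : 0 ≤ μ) (hf₀ : 0 ≤ f) (hg₀ : 0 ≤ g)
    (hf : Antitone f) (hg : Antitone g) (hμ : ∀ a b, μ a * μ b ≤ μ (a ⊓ b) * μ (a ⊔ b)) :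
    (∑ a, μ a * f a) * ∑ a, μ a * g a ≤ (∑ a, μ a) * ∑ a, μ a * (f a * g a) :=
  fkg (α := αᵒᵈ) (f ∘ OrderDual.ofDual) (g ∘ OrderDual.ofDual) (μ ∘ OrderDual.ofDual)
    (fun a => hμ₀ a.ofDual) (fun a => hf₀ a.ofDual)
    (fun a => hg₀ a.ofDual) hf.dual_left hg.dual_left fun a b => by
      simpa only [Function.comp, ofDual_inf, ofDual_sup, mul_comm (μ (_ ⊔ _))] using
        hμ a.ofDual b.ofDual

lemma toNNReal_measure_singleton_mul_le {α : Type*} [Lattice α] [MeasurableSpace α]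
    {μ : Measure α} [IsFiniteMeasure μ]
    (hμ : ∀ a b, μ {a} * μ {b} ≤ μ {a ⊓ b} * μ {a ⊔ b}) (a b : α) :
    (μ {a}).toNNReal * (μ {b}).toNNReal ≤ (μ {a ⊓ b}).toNNReal * (μ {a ⊔ b}).toNNReal := by
  rw [← ENNReal.toNNReal_mul, ← ENNReal.toNNReal_mul]
  exact ENNReal.toNNReal_mono (ENNReal.mul_ne_top (measure_ne_top _ _) (measure_ne_top _ _))
    (hμ a b)

section Harris

variable {α : Type*} [Fintype α] [MeasurableSpace α] [MeasurableSingletonClass α]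

lemma measure_eq_sum_toNNReal_mul_indicator (μ : Measure α) [IsFiniteMeasure μ] (s : Set α) :
    μ s = ↑(∑ a, (μ {a}).toNNReal * s.indicator 1 a) := by
  conv_lhs => rw [← Measure.sum_smul_dirac μ]
  rw [Measure.sum_apply _ s.toFinite.measurableSet, tsum_fintype]
  push_cast
  refine Finset.sum_congr rfl fun a _ => ?_
  rw [ENNReal.coe_toNNReal (measure_ne_top _ _)]
  by_cases ha : a ∈ s <;> simp [ha, Measure.dirac_apply' _ s.toFinite.measurableSet]

lemma measure_mul_le_measure_inter_of_fkg {μ : Measure α} [IsProbabilityMeasure μ]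
    {s t : Set α}
    (h : (∑ a, (μ {a}).toNNReal * s.indicator 1 a) * ∑ a, (μ {a}).toNNReal * t.indicator 1 a ≤
      (∑ a, (μ {a}).toNNReal) *
        ∑ a, (μ {a}).toNNReal * (s.indicator 1 a * t.indicator 1 a)) :
    μ s * μ t ≤ μ (s ∩ t) := by
  have hone : ∑ a, (μ {a}).toNNReal = 1 := by
    have := measure_eq_sum_toNNReal_mul_indicator μ Set.univ
    simp only [measure_univ, Set.indicator_univ, Pi.one_apply, mul_one] at this
    exact_mod_cast this.symm
  rw [measure_eq_sum_toNNReal_mul_indicator μ s, measure_eq_sum_toNNReal_mul_indicator μ t,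
    measure_eq_sum_toNNReal_mul_indicator μ (s ∩ t), ← ENNReal.coe_mul, ENNReal.coe_le_coe]
  simpa only [hone, one_mul, Set.inter_indicator_one, Pi.mul_apply] using h

variable [DistribLattice α]

lemma measure_mul_le_measure_inter_of_isUpperSet {μ : Measure α} [IsProbabilityMeasure μ]
    (hμ : ∀ a b, μ {a} * μ {b} ≤ μ {a ⊓ b} * μ {a ⊔ b}) {s t : Set α}
    (hs : IsUpperSet s) (ht : IsUpperSet t) : μ s * μ t ≤ μ (s ∩ t) :=
  measure_mul_le_measure_inter_of_fkg <| fkg _ _ _ (fun _ => zero_le)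
    (Set.indicator_nonneg fun _ _ => zero_le_one) (Set.indicator_nonneg fun _ _ => zero_le_one)
    hs.monotone_indicator_one ht.monotone_indicator_one (toNNReal_measure_singleton_mul_le hμ)

lemma measure_mul_le_measure_inter_of_isLowerSet {μ : Measure α} [IsProbabilityMeasure μ]
    (hμ : ∀ a b, μ {a} * μ {b} ≤ μ {a ⊓ b} * μ {a ⊔ b}) {s t : Set α}
    (hs : IsLowerSet s) (ht : IsLowerSet t) : μ s * μ t ≤ μ (s ∩ t) :=
  measure_mul_le_measure_inter_of_fkg <| fkg_of_antitone (fun _ => zero_le)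
    (Set.indicator_nonneg fun _ _ => zero_le_one) (Set.indicator_nonneg fun _ _ => zero_le_one)
    hs.antitone_indicator_one ht.antitone_indicator_one (toNNReal_measure_singleton_mul_le hμ)

end Harris

lemma eexp_eq_exp : eexp = EReal.exp := by
  funext x
  induction x with
  | bot => rfl
  | coe x => simp [eexp, EReal.exp_coe]
  | top => rfl

lemma softOr_le {ι : Type*} [Fintype ι] {α : ℝ} (hα : 0 < α) {x : ι → EReal} {y : EReal}
    (h : ∀ i, x i ≤ y) : softOr α x ≤ y := by
  have hα' : (0 : EReal) ≤ (α⁻¹ : ℝ) := EReal.coe_nonneg.mpr (inv_nonneg.mpr hα.le)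
  have hmean : (∑ i, eexp (((α⁻¹ : ℝ) : EReal) * x i)) / (Fintype.card ι : ℝ≥0∞) ≤
      EReal.exp (((α⁻¹ : ℝ) : EReal) * y) := by
    refine ENNReal.div_le_of_le_mul ?_
    rw [eexp_eq_exp]
    calc ∑ i, EReal.exp (((α⁻¹ : ℝ) : EReal) * x i)
        ≤ ∑ _i : ι, EReal.exp (((α⁻¹ : ℝ) : EReal) * y) :=
          Finset.sum_le_sum fun i _ => EReal.exp_monotone (mul_le_mul_of_nonneg_left (h i) hα')
      _ = _ := by rw [Finset.sum_const, nsmul_eq_mul, mul_comm, Finset.card_univ]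
  calc softOr α x ≤ (α : EReal) * (((α⁻¹ : ℝ) : EReal) * y) :=
        mul_le_mul_of_nonneg_left ((ENNReal.log_monotone hmean).trans_eq (EReal.log_exp _))
          (EReal.coe_nonneg.mpr hα.le)
    _ = y := by
      rw [← mul_assoc, ← EReal.coe_mul, mul_inv_cancel₀ hα.ne', EReal.coe_one, one_mul]

lemma le_log_measure_mono {α : Type*} [MeasurableSpace α] {μ : Measure α} {s t : Set α}
    {x : EReal} (hx : x ≤ ENNReal.log (μ s)) (hst : s ⊆ t) : x ≤ ENNReal.log (μ t) :=
  hx.trans (ENNReal.log_monotone (measure_mono hst))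

lemma softOr_pair_le {α : ℝ} (hα : 0 < α) {a b y : EReal} (ha : a ≤ y) (hb : b ≤ y) :
    softOr α ![a, b] ≤ y :=
  softOr_le hα fun i => by fin_cases i <;> simpa

lemma Monotone.isUpperSet_setOf_eq_true {α : Type*} [Preorder α] {f : α → Bool}
    (hf : Monotone f) : IsUpperSet {a | f a = true} :=
  fun _ _ hab ha => Bool.le_iff_imp.mp (hf hab) ha

lemma Monotone.isLowerSet_setOf_eq_false {α : Type*} [Preorder α] {f : α → Bool}
    (hf : Monotone f) : IsLowerSet {a | f a = false} := by
  have hcompl : {a | f a = false} = {a | f a = true}ᶜ := by ext; simp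
  exact hcompl ▸ hf.isUpperSet_setOf_eq_true.compl

lemma lintegral_ite_eq_true_one_zero {Ω : Type*} [MeasurableSpace Ω] [DiscreteMeasurableSpace Ω]
    (μ : Measure Ω) (f : Ω → Bool) :
    ∫⁻ ω, (if f ω = true then 1 else 0) ∂μ = μ {ω | f ω = true} := by
  rw [← lintegral_indicator_one (MeasurableSet.of_discrete)]
  congr 1 with ω
  cases h : f ω <;> simp [h]

lemma lintegral_ite_eq_true_zero_one {Ω : Type*} [MeasurableSpace Ω] [DiscreteMeasurableSpace Ω]
    (μ : Measure Ω) (f : Ω → Bool) :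
    ∫⁻ ω, (if f ω = true then 0 else 1) ∂μ = μ {ω | f ω = false} := by
  rw [← lintegral_indicator_one (MeasurableSet.of_discrete)]
  congr 1 with ω
  cases h : f ω <;> simp [h]

lemma bernoulliMeasure_singleton_true (p : ℝ) : bernoulliMeasure p {true} = ENNReal.ofReal p := by
  simp [bernoulliMeasure]

lemma bernoulliMeasure_singleton_false (p : ℝ) :
    bernoulliMeasure p {false} = ENNReal.ofReal (1 - p) := by
  simp [bernoulliMeasure]

lemma isProbabilityMeasure_bernoulliMeasure {p : ℝ} (hp : p ∈ Set.Icc (0 : ℝ) 1) :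
    IsProbabilityMeasure (bernoulliMeasure p) := by
  constructor
  simp [bernoulliMeasure, ← ENNReal.ofReal_add hp.1 (sub_nonneg.mpr hp.2)]

lemma bernoulliMeasure_zero : bernoulliMeasure 0 = Measure.dirac false := by
  simp [bernoulliMeasure]

lemma Bool.apply_mul_apply_eq_inf_sup {M : Type*} [CommMagma M] (q : Bool → M) (a b : Bool) :
    q a * q b = q (a ⊓ b) * q (a ⊔ b) := by
  cases a <;> cases b <;> simp [mul_comm]

section Bern

variable {d : ℕ} {W : Fin d → Fin d → ℝ}

lemma isProbabilityMeasure_bernMeasure (hW : ∀ u v, W u v ∈ Set.Icc (0 : ℝ) 1) :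
    IsProbabilityMeasure (bernMeasure W) :=
  have := fun u v => isProbabilityMeasure_bernoulliMeasure (hW u v)
  Measure.pi.instIsProbabilityMeasure _

lemma bernMeasure_singleton (A : Fin d → Fin d → Bool) :
    bernMeasure W {A} = ∏ u, ∏ v, bernoulliMeasure (W u v) {A u v} := by
  simp_rw [bernMeasure, ← Set.univ_pi_singleton A, Measure.pi_pi, ← Set.univ_pi_singleton (A _),
    Measure.pi_pi]

lemma bernMeasure_singleton_mul_singleton (A B : Fin d → Fin d → Bool) :
    bernMeasure W {A} * bernMeasure W {B} = bernMeasure W {A ⊓ B} * bernMeasure W {A ⊔ B} := by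
  simp only [bernMeasure_singleton, ← Finset.prod_mul_distrib]
  exact Finset.prod_congr rfl fun u _ => Finset.prod_congr rfl fun v _ =>
    Bool.apply_mul_apply_eq_inf_sup (fun b => bernoulliMeasure (W u v) {b}) _ _

lemma bernMeasure_setOf_apply_eq (hW : ∀ u v, W u v ∈ Set.Icc (0 : ℝ) 1) (u v : Fin d)
    (b : Bool) : bernMeasure W {A | A u v = b} = bernoulliMeasure (W u v) {b} := by
  have := fun u v => isProbabilityMeasure_bernoulliMeasure (hW u v)
  have hrow := (measurePreserving_eval _ v).comp (measurePreserving_eval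
    (fun u => Measure.pi fun v => bernoulliMeasure (W u v)) u)
  exact hrow.measure_preimage (measurableSet_singleton b).nullMeasurableSet

lemma delW_mem_Icc (hW : ∀ u v, W u v ∈ Set.Icc (0 : ℝ) 1) (z u v : Fin d) :
    delW W z u v ∈ Set.Icc (0 : ℝ) 1 := by
  unfold delW
  split_ifs
  exacts [hW u v, ⟨le_rfl, zero_le_one⟩]

lemma bernoulliMeasure_map_and {p : ℝ} (hp : p ∈ Set.Icc (0 : ℝ) 1) (c : Bool) :
    (bernoulliMeasure p).map (· && c) = bernoulliMeasure (if c then p else 0) := by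
  have := isProbabilityMeasure_bernoulliMeasure hp
  cases c
  · simp only [Bool.and_false, Measure.map_const, measure_univ, one_smul, bernoulliMeasure_zero,
      Bool.false_eq_true, if_false]
  · simp

lemma map_delNode_bernMeasure (hW : ∀ u v, W u v ∈ Set.Icc (0 : ℝ) 1) (z : Fin d) :
    (bernMeasure W).map (delNode · z) = bernMeasure (delW W z) := by
  have := fun u v => isProbabilityMeasure_bernoulliMeasure (hW u v)
  have hdel : (delNode · z) = fun (A : Fin d → Fin d → Bool) u v =>
      A u v && (decide (u ≠ z) && decide (v ≠ z)) := by
    funext A u v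
    simp [delNode, Bool.and_assoc]
  unfold bernMeasure
  rw [hdel, Measure.pi_map_pi (f := fun u (g : Fin d → Bool) v =>
    g v && (decide (u ≠ z) && decide (v ≠ z))) fun _ => Measurable.of_discrete.aemeasurable]
  congr! 2 with u
  rw [Measure.pi_map_pi (f := fun v (b : Bool) => b && (decide (u ≠ z) && decide (v ≠ z)))
    fun _ => Measurable.of_discrete.aemeasurable]
  congr! 2 with v
  rw [bernoulliMeasure_map_and (hW u v), delW]
  simp

end Bern

section Graph

variable {d : ℕ}

lemma reachF_succ_eq_true_iff {A : Fin d → Fin d → Bool} {l : ℕ} {x y : Fin d} :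
    ReachF A (l + 1) x y = true ↔
      (∃ u, ReachF A l x u = true ∧ A u y = true) ∨ ReachF A l x y = true := by
  simp [ReachF]

lemma monotone_reachF (l : ℕ) (x y : Fin d) : Monotone fun A => ReachF A l x y := by
  induction l generalizing y with
  | zero => exact monotone_const
  | succ l ih =>
    intro A B hAB
    simp only [Bool.le_iff_imp, reachF_succ_eq_true_iff]
    rintro (⟨u, hxu, huy⟩ | hxy)
    · exact Or.inl ⟨u, Bool.le_iff_imp.mp (ih u hAB) hxu, Bool.le_iff_imp.mp (hAB u y) huy⟩
    · exact Or.inr (Bool.le_iff_imp.mp (ih y hAB) hxy)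

lemma monotone_C0 (x y : Fin d) : Monotone fun A => C0 A x y := by
  intro A B hAB
  simp only [C0, Bool.le_iff_imp, decide_eq_true_eq]
  exact fun ⟨a, hx, hy⟩ =>
    ⟨a, Bool.le_iff_imp.mp (monotone_reachF d a x hAB) hx,
      Bool.le_iff_imp.mp (monotone_reachF d a y hAB) hy⟩

lemma monotone_delNode (z : Fin d) : Monotone (delNode · z) := by
  intro A B hAB u v
  simp only [delNode, Bool.le_iff_imp, Bool.and_eq_true]
  exact fun ⟨⟨h, hu⟩, hv⟩ => ⟨⟨Bool.le_iff_imp.mp (hAB u v) h, hu⟩, hv⟩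

end Graph

section SoftBounds

variable {d : ℕ} {W : Fin d → Fin d → ℝ} {α : ℝ}

lemma add_le_log_bernMeasure_inter_of_isUpperSet (hW : ∀ u v, W u v ∈ Set.Icc (0 : ℝ) 1)
    {S T : Set (Fin d → Fin d → Bool)} (hS : IsUpperSet S) (hT : IsUpperSet T) {s t : EReal}
    (hs : s ≤ ENNReal.log (bernMeasure W S)) (ht : t ≤ ENNReal.log (bernMeasure W T)) :
    s + t ≤ ENNReal.log (bernMeasure W (S ∩ T)) := by
  have := isProbabilityMeasure_bernMeasure hW
  calc s + t ≤ ENNReal.log (bernMeasure W S * bernMeasure W T) :=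
        ENNReal.log_mul_add ▸ add_le_add hs ht
    _ ≤ _ := ENNReal.log_monotone <| measure_mul_le_measure_inter_of_isUpperSet
        (fun A B => (bernMeasure_singleton_mul_singleton A B).le) hS hT

lemma add_le_log_bernMeasure_inter_of_isLowerSet (hW : ∀ u v, W u v ∈ Set.Icc (0 : ℝ) 1)
    {S T : Set (Fin d → Fin d → Bool)} (hS : IsLowerSet S) (hT : IsLowerSet T) {s t : EReal}
    (hs : s ≤ ENNReal.log (bernMeasure W S)) (ht : t ≤ ENNReal.log (bernMeasure W T)) :
    s + t ≤ ENNReal.log (bernMeasure W (S ∩ T)) := by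
  have := isProbabilityMeasure_bernMeasure hW
  calc s + t ≤ ENNReal.log (bernMeasure W S * bernMeasure W T) :=
        ENNReal.log_mul_add ▸ add_le_add hs ht
    _ ≤ _ := ENNReal.log_monotone <| measure_mul_le_measure_inter_of_isLowerSet
        (fun A B => (bernMeasure_singleton_mul_singleton A B).le) hS hT

lemma sum_le_log_bernMeasure_biInter_of_isLowerSet (hW : ∀ u v, W u v ∈ Set.Icc (0 : ℝ) 1)
    {ι : Type*} [DecidableEq ι] (s : Finset ι) {E : ι → Set (Fin d → Fin d → Bool)}
    {t : ι → EReal} (hE : ∀ i, IsLowerSet (E i))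
    (ht : ∀ i, t i ≤ ENNReal.log (bernMeasure W (E i))) :
    ∑ i ∈ s, t i ≤ ENNReal.log (bernMeasure W (⋂ i ∈ s, E i)) := by
  have := isProbabilityMeasure_bernMeasure hW
  induction s using Finset.induction_on with
  | empty => simp
  | insert i s hi ih =>
    rw [Finset.sum_insert hi, Finset.set_biInter_insert]
    exact add_le_log_bernMeasure_inter_of_isLowerSet hW (hE i)
      (isLowerSet_iInter₂ fun j _ => hE j) (ht i) ih

lemma elog_ofReal_eq_log_bernMeasure_edge (hW : ∀ u v, W u v ∈ Set.Icc (0 : ℝ) 1)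
    (u v : Fin d) :
    elog (ENNReal.ofReal (W u v)) = ENNReal.log (bernMeasure W {A | A u v = true}) := by
  rw [bernMeasure_setOf_apply_eq hW, bernoulliMeasure_singleton_true]
  rfl

lemma elog_ofReal_eq_log_bernMeasure_nonedge (hW : ∀ u v, W u v ∈ Set.Icc (0 : ℝ) 1)
    (u v : Fin d) :
    elog (ENNReal.ofReal (1 - W u v)) = ENNReal.log (bernMeasure W {A | A u v = false}) := by
  rw [bernMeasure_setOf_apply_eq hW, bernoulliMeasure_singleton_false]
  rfl

lemma softReach_le_log (hW : ∀ u v, W u v ∈ Set.Icc (0 : ℝ) 1) (hα : 0 < α) (l : ℕ)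
    (x y : Fin d) :
    softReach α W l x y ≤ ENNReal.log (bernMeasure W {A | ReachF A l x y = true}) := by
  have := isProbabilityMeasure_bernMeasure hW
  induction l generalizing y with
  | zero => by_cases hxy : x = y <;> simp [softReach, ReachF, hxy]
  | succ l ih =>
    refine softOr_le hα (Fin.cases ?_ fun u => ?_)
    · exact le_log_measure_mono (ih y) fun A h => reachF_succ_eq_true_iff.mpr (Or.inr h)
    · refine le_log_measure_mono (add_le_log_bernMeasure_inter_of_isUpperSet hW
        (monotone_reachF l x u).isUpperSet_setOf_eq_true
        (fun A B hAB => Bool.le_iff_imp.mp (hAB u y)) (ih u)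
        (elog_ofReal_eq_log_bernMeasure_edge hW u y).le) ?_
      exact fun A h => reachF_succ_eq_true_iff.mpr (Or.inl ⟨u, h⟩)

lemma softUnreach_le_log (hW : ∀ u v, W u v ∈ Set.Icc (0 : ℝ) 1) (hα : 0 < α) (l : ℕ)
    (x y : Fin d) :
    softUnreach α W l x y ≤ ENNReal.log (bernMeasure W {A | ReachF A l x y = false}) := by
  have := isProbabilityMeasure_bernMeasure hW
  induction l generalizing y with
  | zero => by_cases hxy : x = y <;> simp [softUnreach, ReachF, hxy]
  | succ l ih =>
    have hlast : ∀ u, IsLowerSet ({A | ReachF A l x u = false} ∪ {A | A u y = false}) :=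
      fun u => (monotone_reachF l x u).isLowerSet_setOf_eq_false.union
        (Monotone.isLowerSet_setOf_eq_false fun A B hAB => hAB u y)
    refine le_log_measure_mono (add_le_log_bernMeasure_inter_of_isLowerSet hW
      (isLowerSet_iInter₂ fun u _ => hlast u) (monotone_reachF l x y).isLowerSet_setOf_eq_false
      (sum_le_log_bernMeasure_biInter_of_isLowerSet hW _ hlast fun u => softOr_pair_le hα
        (le_log_measure_mono (ih u) Set.subset_union_left)
        (le_log_measure_mono (elog_ofReal_eq_log_bernMeasure_nonedge hW u y).le
          Set.subset_union_right)) (ih y)) ?_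
    rintro A ⟨hlast, hxy⟩
    simp only [Set.mem_iInter, Set.mem_union, Set.mem_ofPred_eq, Finset.mem_univ,
      forall_const] at hlast hxy ⊢
    simp only [ReachF, hxy, Bool.or_false, decide_eq_false_iff_not, not_exists, not_and]
    intro u hxu huy
    rcases hlast u with h | h <;> simp_all

lemma softC0_le_log (hW : ∀ u v, W u v ∈ Set.Icc (0 : ℝ) 1) (hα : 0 < α) (x y : Fin d) :
    softC0 α W x y ≤ ENNReal.log (bernMeasure W {A | C0 A x y = true}) :=
  softOr_le hα fun a => le_log_measure_mono (add_le_log_bernMeasure_inter_of_isUpperSet hW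
    (monotone_reachF d a x).isUpperSet_setOf_eq_true
    (monotone_reachF d a y).isUpperSet_setOf_eq_true
    (softReach_le_log hW hα d a x) (softReach_le_log hW hα d a y))
    fun A h => by simpa [C0] using ⟨a, h⟩

lemma softS0_le_log (hW : ∀ u v, W u v ∈ Set.Icc (0 : ℝ) 1) (hα : 0 < α) (x y : Fin d) :
    softS0 α W x y ≤ ENNReal.log (bernMeasure W {A | C0 A x y = false}) := by
  have hcut : ∀ a, IsLowerSet ({A | ReachF A d a x = false} ∪ {A | ReachF A d a y = false}) :=
    fun a => (monotone_reachF d a x).isLowerSet_setOf_eq_false.union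
      (monotone_reachF d a y).isLowerSet_setOf_eq_false
  refine le_log_measure_mono (sum_le_log_bernMeasure_biInter_of_isLowerSet hW _ hcut
    fun a => softOr_pair_le hα
      (le_log_measure_mono (softUnreach_le_log hW hα d a x) Set.subset_union_left)
      (le_log_measure_mono (softUnreach_le_log hW hα d a y) Set.subset_union_right)) ?_
  intro A hA
  simp only [Set.mem_iInter, Set.mem_union, Set.mem_ofPred_eq, Finset.mem_univ,
    forall_const] at hA ⊢
  simp only [C0, decide_eq_false_iff_not, not_exists, not_and]
  intro a hax hay
  rcases hA a with h | h <;> simp_all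

lemma bernMeasure_delW_apply (hW : ∀ u v, W u v ∈ Set.Icc (0 : ℝ) 1) (z : Fin d)
    (E : Set (Fin d → Fin d → Bool)) :
    bernMeasure (delW W z) E = bernMeasure W ((delNode · z) ⁻¹' E) := by
  rw [← map_delNode_bernMeasure hW,
    Measure.map_apply Measurable.of_discrete E.toFinite.measurableSet]

end SoftBounds

section FirstOrder

variable {d : ℕ} {W : Fin d → Fin d → ℝ} {α : ℝ}

def ancestorLinkSet (x z : Fin d) : Set (Fin d → Fin d → Bool) :=
  {A | ∃ a, a ≠ z ∧ C0 (delNode A z) x a = true ∧ ReachF A d a z = true}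

lemma C1_eq_true_iff {A : Fin d → Fin d → Bool} {x y z : Fin d} :
    C1 A x y z = true ↔
      C0 (delNode A z) x y = true ∨
        (A ∈ ancestorLinkSet x z ∧ A ∈ ancestorLinkSet y z) := by
  simp [C1, ancestorLinkSet]

lemma isUpperSet_ancestorLinkSet (x z : Fin d) : IsUpperSet (ancestorLinkSet x z) :=
  fun _ _ hAB ⟨a, ha, hxa, haz⟩ =>
    ⟨a, ha, Bool.le_iff_imp.mp ((monotone_C0 x a).comp (monotone_delNode z) hAB) hxa,
      Bool.le_iff_imp.mp (monotone_reachF d a z hAB) haz⟩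

lemma softC0_delW_le_log (hW : ∀ u v, W u v ∈ Set.Icc (0 : ℝ) 1) (hα : 0 < α)
    (x y z : Fin d) :
    softC0 α (delW W z) x y ≤ ENNReal.log (bernMeasure W {A | C0 (delNode A z) x y = true}) := by
  have h := softC0_le_log (delW_mem_Icc hW z) hα x y
  rwa [bernMeasure_delW_apply hW] at h

lemma softS0_delW_le_log (hW : ∀ u v, W u v ∈ Set.Icc (0 : ℝ) 1) (hα : 0 < α)
    (x y z : Fin d) :
    softS0 α (delW W z) x y ≤
      ENNReal.log (bernMeasure W {A | C0 (delNode A z) x y = false}) := by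
  have h := softS0_le_log (delW_mem_Icc hW z) hα x y
  rwa [bernMeasure_delW_apply hW] at h

lemma softOr_softC0_add_softReach_le_log (hW : ∀ u v, W u v ∈ Set.Icc (0 : ℝ) 1)
    (hα : 0 < α) (x z : Fin d) :
    softOr α (fun a : {a : Fin d // a ≠ z} =>
        softC0 α (delW W z) x a.1 + softReach α W d a.1 z)
      ≤ ENNReal.log (bernMeasure W (ancestorLinkSet x z)) :=
  softOr_le hα fun a => le_log_measure_mono (add_le_log_bernMeasure_inter_of_isUpperSet hW
    ((monotone_C0 x a.1).comp (monotone_delNode z)).isUpperSet_setOf_eq_true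
    (monotone_reachF d a.1 z).isUpperSet_setOf_eq_true
    (softC0_delW_le_log hW hα x a.1 z) (softReach_le_log hW hα d a.1 z))
    fun _ h => ⟨a.1, a.2, h⟩

lemma sum_softOr_softS0_softUnreach_le_log (hW : ∀ u v, W u v ∈ Set.Icc (0 : ℝ) 1)
    (hα : 0 < α) (x z : Fin d) :
    ∑ a ∈ Finset.univ.erase z, softOr α ![softS0 α (delW W z) x a, softUnreach α W d a z]
      ≤ ENNReal.log (bernMeasure W (ancestorLinkSet x z)ᶜ) := by
  have hcut : ∀ a, IsLowerSet
      ({A | C0 (delNode A z) x a = false} ∪ {A | ReachF A d a z = false}) :=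
    fun a => ((monotone_C0 x a).comp (monotone_delNode z)).isLowerSet_setOf_eq_false.union
      (monotone_reachF d a z).isLowerSet_setOf_eq_false
  refine le_log_measure_mono (sum_le_log_bernMeasure_biInter_of_isLowerSet hW _ hcut
    fun a => softOr_pair_le hα
      (le_log_measure_mono (softS0_delW_le_log hW hα x a z) Set.subset_union_left)
      (le_log_measure_mono (softUnreach_le_log hW hα d a z) Set.subset_union_right)) ?_
  rintro A hA ⟨a, ha, hxa, haz⟩
  rcases Set.mem_iInter₂.mp hA a (Finset.mem_erase.mpr ⟨ha, Finset.mem_univ a⟩) with h | h <;>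
    simp_all

lemma softC1_le_log (hW : ∀ u v, W u v ∈ Set.Icc (0 : ℝ) 1) (hα : 0 < α) (x y z : Fin d) :
    softC1 α W x y z ≤ ENNReal.log (bernMeasure W {A | C1 A x y z = true}) :=
  softOr_pair_le hα
    (le_log_measure_mono (softC0_delW_le_log hW hα x y z)
      fun _ h => C1_eq_true_iff.mpr (Or.inl h))
    (le_log_measure_mono (add_le_log_bernMeasure_inter_of_isUpperSet hW
      (isUpperSet_ancestorLinkSet x z) (isUpperSet_ancestorLinkSet y z)
      (softOr_softC0_add_softReach_le_log hW hα x z)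
      (softOr_softC0_add_softReach_le_log hW hα y z))
      fun _ h => C1_eq_true_iff.mpr (Or.inr h))

lemma softS1_le_log (hW : ∀ u v, W u v ∈ Set.Icc (0 : ℝ) 1) (hα : 0 < α) (x y z : Fin d) :
    softS1 α W x y z ≤ ENNReal.log (bernMeasure W {A | C1 A x y z = false}) := by
  refine le_log_measure_mono (add_le_log_bernMeasure_inter_of_isLowerSet hW
    ((monotone_C0 x y).comp (monotone_delNode z)).isLowerSet_setOf_eq_false
    ((isUpperSet_ancestorLinkSet x z).compl.union (isUpperSet_ancestorLinkSet y z).compl)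
    (softS0_delW_le_log hW hα x y z)
    (softOr_pair_le hα
      (le_log_measure_mono (sum_softOr_softS0_softUnreach_le_log hW hα x z)
        Set.subset_union_left)
      (le_log_measure_mono (sum_softOr_softS0_softUnreach_le_log hW hα y z)
        Set.subset_union_right))) ?_
  rintro A ⟨hxy, hlink⟩
  simp only [Set.mem_ofPred_eq, Bool.eq_false_iff, ne_eq, C1_eq_true_iff] at hxy ⊢
  simp only [Set.mem_union, Set.mem_compl_iff] at hlink
  tauto

end FirstOrder

/-- Theorem 3.7, 1st-order inequalities: the soft 1st-order d-separation and
d-connection scores lower-bound the logarithms of the expected indicators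
`S_A^(1)(x,y∣z) = 1 − C_A^(1)(x,y∣z)` and `C_A^(1)(x,y∣z)` under `Bern(W)`. -/
theorem soft1_le_log_expectation {d : ℕ} (W : Fin d → Fin d → ℝ)
    (hW : ∀ u v, W u v ∈ Set.Icc (0 : ℝ) 1) (α : ℝ) (hα : α ∈ Set.Ioc (0 : ℝ) 1)
    (x y z : Fin d) :
    softS1 α W x y z ≤
      elog (∫⁻ A, (if C1 A x y z = true then 0 else 1) ∂ bernMeasure W) ∧
    softC1 α W x y z ≤
      elog (∫⁻ A, (if C1 A x y z = true then 1 else 0) ∂ bernMeasure W) := by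
  rw [lintegral_ite_eq_true_zero_one, lintegral_ite_eq_true_one_zero]
  exact ⟨softS1_le_log hW hα.1 x y z, softC1_le_log hW hα.1 x y z⟩
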